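/- arXiv:1802.01091 — 3 statements merged into one kernel-verified Lean document; each statement's English description precedes it below -/
import Mathlib

section
/- Let m ≥ 2 be an integer and let H be a graph with chromatic number χ(H) = r+1 > m. Then there exist a constant c > 0 and n₀ such that for all n ≥ n₀: ex(n, K_m, H) ≥ N(T_r(n), K_m) + c · biex(n,H) · n^{m−2}. -/
/-!
Take an `n`-vertex graph `B` with `biex(n, H)` edges and no member of the decomposition family.
A max-cut argument keeps half of its edges in a bipartite subgraph, and pigeonholing over pairs of
residue classes mod `3r` keeps a `1 / #Sym2 (Fin (3r))` fraction of those on at most `n / r`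
vertices. Relabel this bipartite graph `B₁` into part `0` of `T_r(n)` and add its edges.
`T_r(n) ⊔ B₁` is still `H`-free: colour part `0` by the bipartition of `B₁` and part `i > 0` by
`i + 1`; a copy of `H` then gets a proper `(r + 1)`-colouring whose first two colour classes span a
member of the decomposition family inside `B₁ ⊑ B`. Each edge of `B₁` together with one vertex from
each of the parts `1, …, m - 2` is a new `K_m`, which gives `e(B₁) (n / r) ^ (m - 2)` new copies.
-/

open SimpleGraph

/-- The number of copies of `T` in `G`, i.e. the number of subgraphs of `G` isomorphic to `T`. -/
noncomputable def copies {α β : Type*} (T : SimpleGraph α) (G : SimpleGraph β) : ℕ :=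
  Nat.card {H : G.Subgraph // Nonempty (H.coe ≃g T)}

/-- `G` contains no subgraph isomorphic to `T`. -/
def Free {α β : Type*} (T : SimpleGraph α) (G : SimpleGraph β) : Prop :=
  ∀ H : G.Subgraph, ¬ Nonempty (H.coe ≃g T)

/-- The generalized Turán number `ex(n, T, H)`: the maximum number of copies of `T`
in an `H`-free graph on `n` vertices. -/
noncomputable def genEx {α β : Type*} (n : ℕ) (T : SimpleGraph α) (H : SimpleGraph β) : ℕ :=
  sSup {k | ∃ G : SimpleGraph (Fin n), _root_.Free H G ∧ copies T G = k}

/-- `biex n H r`: maximum number of edges of an `n`-vertex graph containing no member of the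
decomposition family of `H` (where `χ(H) = r+1`), i.e. no bipartite graph obtained from `H`
by deleting `r-1` color classes of a proper `(r+1)`-coloring. -/
noncomputable def biex {W : Type*} (n : ℕ) (H : SimpleGraph W) (r : ℕ) : ℕ :=
  sSup {k | ∃ G : SimpleGraph (Fin n),
    (∀ (C : H.Coloring (Fin (r + 1))) (c₁ c₂ : Fin (r + 1)), c₁ ≠ c₂ →
      _root_.Free (SimpleGraph.induce {v | C v = c₁ ∨ C v = c₂} H) G) ∧
    Nat.card G.edgeSet = k}

open Finset

theorem copies_le_genEx {α β : Type*} {n : ℕ} {T : SimpleGraph α} {H : SimpleGraph β}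
    {G : SimpleGraph (Fin n)} (hG : _root_.Free H G) : copies T G ≤ genEx n T H := by
  refine le_csSup ⟨Nat.card (Set (Fin n) × (Fin n → Fin n → Prop)), ?_⟩ ⟨G, hG, rfl⟩
  rintro k ⟨G', -, rfl⟩
  refine Nat.card_le_card_of_injective (fun K => (K.1.verts, K.1.Adj)) fun K L h => ?_
  simp only [Prod.mk.injEq] at h
  exact Subtype.ext (Subgraph.ext h.1 h.2)

theorem Nat.le_two_mul_mul_div {n r : ℕ} (hr : 0 < r) (hrn : r ≤ n) : n ≤ 2 * r * (n / r) := by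
  have h1 : n < n / r * r + r := Nat.lt_div_mul_add hr
  have h2 : 1 ≤ n / r := (Nat.le_div_iff_mul_le hr).2 (by omega)
  nlinarith

theorem Fin.card_filter_eq_count (n : ℕ) (P : ℕ → Prop) [DecidablePred P] :
    #{v : Fin n | P v} = Nat.count P n := by
  rw [Nat.count_eq_card_filter_range, ← Nat.Iio_eq_range, ← Fin.map_valEmbedding_univ,
    filter_map, card_map]
  rfl

theorem Fin.card_filter_mod_eq (n : ℕ) {r t : ℕ} (hr : 0 < r) (ht : t < r) :
    #{v : Fin n | (v : ℕ) % r = t} = n / r + if t < n % r then 1 else 0 := by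
  rw [Fin.card_filter_eq_count n (· % r = t), ← Nat.mod_eq_of_lt ht, ← Nat.count_modEq_card n hr]
  rfl

theorem Fin.div_le_card_filter_mod_eq (n : ℕ) {r t : ℕ} (ht : t < r) :
    n / r ≤ #{v : Fin n | (v : ℕ) % r = t} := by
  rw [card_filter_mod_eq n (by omega) ht]
  exact Nat.le_add_right _ _

theorem Fin.card_filter_mod_eq_le (n : ℕ) {r t : ℕ} (ht : t < r) :
    #{v : Fin n | (v : ℕ) % r = t} ≤ n / r + 1 := by
  rw [card_filter_mod_eq n (by omega) ht]
  split_ifs <;> omega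

theorem Equiv.Perm.exists_mapsTo_of_card_le {V : Type*} {S T : Finset V} (h : #S ≤ #T) :
    ∃ σ : Equiv.Perm V, ∀ x ∈ S, σ x ∈ T := by
  obtain ⟨φ⟩ : Nonempty (S ↪ T) := Function.Embedding.nonempty_of_card_le (by simpa using h)
  obtain ⟨σ, hσ⟩ := Equiv.Perm.exists_extending_pair (fun x : S => (x : V)) (fun x => (φ x : V))
    Subtype.val_injective (Subtype.val_injective.comp φ.injective)
  exact ⟨σ, fun x hx => hσ ⟨x, hx⟩ ▸ (φ ⟨x, hx⟩).2⟩

namespace SimpleGraph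

variable {α V W : Type*}

theorem free_iff_not_isContained {T : SimpleGraph α} {G : SimpleGraph V} :
    _root_.Free T G ↔ ¬ T ⊑ G := by
  simp only [_root_.Free, isContained_iff_exists_iso_subgraph, not_exists]
  exact forall_congr' fun K => ⟨fun h ⟨e⟩ => h ⟨e.symm⟩, fun h ⟨e⟩ => h ⟨e.symm⟩⟩

theorem Subgraph.isNClique_of_iso_top {G : SimpleGraph V} {m : ℕ} (K : G.Subgraph)
    [Fintype K.verts] (e : K.coe ≃g (⊤ : SimpleGraph (Fin m))) :
    G.IsNClique m K.verts.toFinset := by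
  refine ⟨fun x hx y hy hxy => ?_, ?_⟩
  · rw [Set.coe_toFinset] at hx hy
    exact K.adj_sub (e.map_rel_iff.mp (by simpa using hxy) : K.coe.Adj ⟨x, hx⟩ ⟨y, hy⟩)
  · rw [Set.toFinset_card, e.card_eq, Fintype.card_fin]

theorem Subgraph.adj_iff_of_iso_top {G : SimpleGraph V} {m : ℕ} (K : G.Subgraph)
    (e : K.coe ≃g (⊤ : SimpleGraph (Fin m))) {x y : V} :
    K.Adj x y ↔ x ∈ K.verts ∧ y ∈ K.verts ∧ G.Adj x y := by
  refine ⟨fun h => ⟨K.edge_vert h, K.edge_vert h.symm, K.adj_sub h⟩, fun ⟨hx, hy, h⟩ => ?_⟩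
  exact (e.map_rel_iff.mp (by simpa using h.ne) : K.coe.Adj ⟨x, hx⟩ ⟨y, hy⟩)

theorem IsNClique.nonempty_iso_top {G : SimpleGraph V} {m : ℕ} {s : Finset V}
    (hs : G.IsNClique m s) :
    Nonempty (((⊤ : G.Subgraph).induce s).coe ≃g (⊤ : SimpleGraph (Fin m))) := by
  classical
  have e : ((⊤ : G.Subgraph).induce s).verts ≃ Fin m := s.equivFinOfCardEq hs.card_eq
  refine ⟨⟨e, fun {x y} => ?_⟩⟩
  simp only [top_adj, ne_eq, e.injective.eq_iff]
  obtain ⟨x, hx⟩ := x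
  obtain ⟨y, hy⟩ := y
  simp only [Subgraph.coe_adj, Subgraph.induce_adj, Subgraph.top_adj, Subtype.mk.injEq]
  exact ⟨fun h => ⟨hx, hy, hs.isClique hx hy h⟩, fun h => h.2.2.ne⟩

theorem copies_top_eq_card_cliqueFinset [Fintype V] [DecidableEq V] (G : SimpleGraph V)
    [DecidableRel G.Adj] (m : ℕ) :
    copies (⊤ : SimpleGraph (Fin m)) G = #(G.cliqueFinset m) := by
  classical
  rw [copies, ← Fintype.card_coe, ← Nat.card_eq_fintype_card]
  refine Nat.card_congr
    { toFun := fun K => ⟨K.1.verts.toFinset, ?_⟩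
      invFun := fun s => ⟨(⊤ : G.Subgraph).induce s, ?_⟩
      left_inv := fun K => ?_
      right_inv := fun s => by ext; simp }
  · exact (G.mem_cliqueFinset_iff).2 (Subgraph.isNClique_of_iso_top K.1 K.2.some)
  · exact ((G.mem_cliqueFinset_iff).1 s.2).nonempty_iso_top
  · ext x y
    · simp
    · simp [Subgraph.adj_iff_of_iso_top K.1 K.2.some]

/-- `B` contains no member of the decomposition family `F_H` (for `χ(H) = r + 1`). -/
def DecompositionFree (H : SimpleGraph W) (r : ℕ) (B : SimpleGraph V) : Prop :=
  ∀ (C : H.Coloring (Fin (r + 1))) (c₁ c₂ : Fin (r + 1)), c₁ ≠ c₂ →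
    _root_.Free (SimpleGraph.induce {v | C v = c₁ ∨ C v = c₂} H) B

theorem exists_adj_of_not_colorable {H : SimpleGraph W} {r : ℕ} (hH : ¬ H.Colorable r)
    (C : H.Coloring (Fin (r + 1))) {c₁ c₂ : Fin (r + 1)} (hc : c₁ ≠ c₂) :
    ∃ u v, H.Adj u v ∧ (C u = c₁ ∨ C u = c₂) ∧ (C v = c₁ ∨ C v = c₂) := by
  by_contra! hno
  refine hH ?_
  let merge (c : Fin (r + 1)) : {c // c ≠ c₂} := if h : c = c₂ then ⟨c₁, hc⟩ else ⟨c, h⟩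
  let C' : H.Coloring {c // c ≠ c₂} := Coloring.mk (merge ∘ C) fun {u v} huv => by
    have := C.valid huv
    have := hno u v huv
    simp only [Function.comp_apply, merge]
    split_ifs <;> simp only [ne_eq, Subtype.mk.injEq] <;> grind
  simpa using C'.colorable

theorem decompositionFree_bot {H : SimpleGraph W} {r : ℕ} (hH : ¬ H.Colorable r) :
    DecompositionFree H r (⊥ : SimpleGraph V) := by
  intro C c₁ c₂ hc
  rw [free_iff_not_isContained]
  rintro ⟨f⟩
  obtain ⟨u, v, huv, hu, hv⟩ := exists_adj_of_not_colorable hH C hc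
  exact (f.toHom.map_adj (show (H.induce _).Adj ⟨u, hu⟩ ⟨v, hv⟩ from huv)).elim

theorem not_colorable_of_chromaticNumber_eq {H : SimpleGraph W} {r : ℕ}
    (hχ : H.chromaticNumber = (r + 1 : ℕ)) : ¬ H.Colorable r := fun h => by
  have := h.chromaticNumber_le
  rw [hχ] at this
  norm_cast at this
  omega

theorem exists_decompositionFree_card_edgeSet_eq_biex {H : SimpleGraph W} {r : ℕ}
    (hH : ¬ H.Colorable r) (n : ℕ) :
    ∃ B : SimpleGraph (Fin n), DecompositionFree H r B ∧ Nat.card B.edgeSet = biex n H r := by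
  refine Nat.sSup_mem (s := {k | ∃ G : SimpleGraph (Fin n), DecompositionFree H r G ∧
      Nat.card G.edgeSet = k}) ⟨_, ⊥, decompositionFree_bot hH, rfl⟩ ⟨Nat.card (Sym2 (Fin n)), ?_⟩
  rintro k ⟨G, -, rfl⟩
  exact Nat.card_le_card_of_injective _ Subtype.val_injective

theorem two_mul_card_filter_ne [Fintype V] [DecidableEq V] {a b : V} (hab : a ≠ b) :
    2 * #{f : V → Bool | f a ≠ f b} = Fintype.card (V → Bool) := by
  let flip (f : V → Bool) : V → Bool := Function.update f b (!f b)
  have flip_flip (f : V → Bool) : flip (flip f) = f := by simp [flip]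
  have flip_eq (f : V → Bool) : flip f a = flip f b ↔ f a ≠ f b := by
    simp [flip, Function.update_of_ne hab, Bool.eq_not_iff]
  have : #{f : V → Bool | f a ≠ f b} = #{f : V → Bool | ¬ f a ≠ f b} :=
    card_nbij' flip flip (fun f hf => by simpa [flip_eq] using hf)
      (fun f hf => by simpa [flip_eq] using hf) (fun f _ => flip_flip f) (fun f _ => flip_flip f)
  rw [two_mul]
  nth_rw 2 [this]
  rw [card_filter_add_card_filter_not, card_univ]

theorem exists_le_colorable_two_and_card_edgeSet_le_two_mul [Fintype V] (B : SimpleGraph V) :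
    ∃ B' ≤ B, B'.Colorable 2 ∧ Nat.card B.edgeSet ≤ 2 * Nat.card B'.edgeSet := by
  classical
  let cut (f : V → Bool) := B ⊓ (⊤ : SimpleGraph Bool).comap f
  have card_cut (f : V → Bool) :
      Nat.card (cut f).edgeSet = #{e ∈ B.edgeFinset | ¬ (e.map f).IsDiag} := by
    rw [Nat.card_eq_card_toFinset]
    congr 1
    ext e
    induction e using Sym2.ind
    simp [cut]
  -- Each edge is cut by exactly half of the colourings `f`.
  have hsum :
      ∑ f : V → Bool, Nat.card B.edgeSet = ∑ f : V → Bool, 2 * Nat.card (cut f).edgeSet := by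
    calc ∑ f : V → Bool, Nat.card B.edgeSet
        = ∑ e ∈ B.edgeFinset, Fintype.card (V → Bool) := by
          rw [sum_const, sum_const, card_univ, Nat.card_eq_card_toFinset, smul_eq_mul,
            smul_eq_mul, mul_comm, edgeFinset]
      _ = ∑ e ∈ B.edgeFinset, 2 * #{f : V → Bool | ¬ (e.map f).IsDiag} := by
          refine sum_congr rfl fun e he => ?_
          induction e using Sym2.ind with | _ a b => ?_
          simpa using (two_mul_card_filter_ne (B.ne_of_adj (B.mem_edgeFinset.1 he))).symm
      _ = ∑ f : V → Bool, 2 * Nat.card (cut f).edgeSet := by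
          simp_rw [card_cut, card_filter, mul_sum]
          exact sum_comm
  obtain ⟨f, -, hf⟩ := exists_le_of_sum_le univ_nonempty hsum.le
  exact ⟨cut f, inf_le_left, by simpa using (Coloring.mk (G := cut f) f fun h => h.2).colorable,
    hf⟩

theorem exists_le_card_edgeSet_le_card_sym2_mul {ι : Type*} [Fintype V] [Fintype ι] [Nonempty ι]
    (B : SimpleGraph V) (p : V → ι) :
    ∃ q : Sym2 ι, ∃ B' ≤ B, (∀ x y, B'.Adj x y → p x ∈ q) ∧
      Nat.card B.edgeSet ≤ Fintype.card (Sym2 ι) * Nat.card B'.edgeSet := by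
  classical
  let fiber (q : Sym2 ι) := B ⊓ fromRel fun x y => s(p x, p y) = q
  have card_fiber (q : Sym2 ι) :
      Nat.card (fiber q).edgeSet = #{e ∈ B.edgeFinset | e.map p = q} := by
    rw [Nat.card_eq_card_toFinset]
    congr 1
    ext e
    induction e using Sym2.ind
    simp +contextual [fiber, Sym2.eq_swap, B.ne_of_adj]
  obtain ⟨q, -, hq⟩ := exists_max_image univ
    (fun q : Sym2 ι => #{e ∈ B.edgeFinset | e.map p = q})
    ⟨s(Classical.arbitrary ι, Classical.arbitrary ι), mem_univ _⟩
  refine ⟨q, fiber q, inf_le_left, fun x y h => ?_, ?_⟩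
  · obtain ⟨-, -, h | h⟩ := h <;> simp [← h]
  · rw [card_fiber, Nat.card_eq_card_toFinset, mul_comm]
    exact card_le_mul_card_image_of_maps_to (fun e _ => mem_univ (e.map p)) _
      fun q' _ => hq q' (mem_univ q')

theorem exists_iso_adj_mem_of_card_le {G : SimpleGraph V} {S T : Finset V}
    (hS : ∀ x y, G.Adj x y → x ∈ S) (h : #S ≤ #T) :
    ∃ G' : SimpleGraph V, Nonempty (G ≃g G') ∧ ∀ x y, G'.Adj x y → x ∈ T := by
  obtain ⟨σ, hσ⟩ := Equiv.Perm.exists_mapsTo_of_card_le h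
  refine ⟨G.map σ, ⟨Iso.map σ G⟩, ?_⟩
  intro x y hxy
  obtain ⟨-, a, b, hab, rfl, rfl⟩ := hxy
  exact hσ a (hS a b hab)

theorem exists_isContained_colorable_two_adj_mod_eq_zero {n r : ℕ} (hr : 0 < r) (hn : 6 * r ≤ n)
    (B : SimpleGraph (Fin n)) :
    ∃ B₁ : SimpleGraph (Fin n), B₁ ⊑ B ∧ B₁.Colorable 2 ∧ (∀ x y, B₁.Adj x y → (x : ℕ) % r = 0) ∧
      Nat.card B.edgeSet ≤ 2 * Fintype.card (Sym2 (Fin (3 * r))) * Nat.card B₁.edgeSet := by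
  classical
  obtain ⟨B', hB'B, hB'col, hB'⟩ := B.exists_le_colorable_two_and_card_edgeSet_le_two_mul
  have : Nonempty (Fin (3 * r)) := ⟨⟨0, by omega⟩⟩
  let block (v : Fin n) : Fin (3 * r) := ⟨v % (3 * r), Nat.mod_lt _ (by omega)⟩
  obtain ⟨q, B'', hB''B', hq, hB''⟩ := B'.exists_le_card_edgeSet_le_card_sym2_mul block
  have hsupport : #{v : Fin n | block v ∈ q} ≤ #{v : Fin n | (v : ℕ) % r = 0} := by
    induction q using Sym2.ind with | _ i j => ?_
    calc #{v : Fin n | block v ∈ s(i, j)}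
        ≤ #{v : Fin n | (v : ℕ) % (3 * r) = i} + #{v : Fin n | (v : ℕ) % (3 * r) = j} := by
          refine (card_le_card fun v hv => ?_).trans (card_union_le _ _)
          simp only [Sym2.mem_iff, mem_filter, mem_univ, true_and, mem_union, block] at hv ⊢
          rcases hv with rfl | rfl <;> simp
      _ ≤ 2 * (n / r / 3 + 1) := by
          rw [Nat.div_div_eq_div_mul, mul_comm r]
          have := Fin.card_filter_mod_eq_le n i.2
          have := Fin.card_filter_mod_eq_le n j.2
          omega
      _ ≤ n / r := by
          have : 6 ≤ n / r := (Nat.le_div_iff_mul_le hr).2 hn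
          omega
      _ ≤ #{v : Fin n | (v : ℕ) % r = 0} := Fin.div_le_card_filter_mod_eq n hr
  obtain ⟨B₁, ⟨e⟩, hB₁⟩ := exists_iso_adj_mem_of_card_le
    (fun x y h => mem_filter.2 ⟨mem_univ x, hq x y h⟩) hsupport
  refine ⟨B₁, ?_, (hB'col.mono_left hB''B').of_hom e.symm.toHom, fun x y h => ?_, ?_⟩
  · exact IsContained.trans ⟨e.symm.toCopy⟩ (IsContained.of_le (hB''B'.trans hB'B))
  · simpa using hB₁ x y h
  · rw [← Nat.card_congr e.mapEdgeSet]
    calc Nat.card B.edgeSet ≤ 2 * Nat.card B'.edgeSet := hB'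
      _ ≤ 2 * (Fintype.card (Sym2 (Fin (3 * r))) * Nat.card B''.edgeSet) := by gcongr
      _ = _ := by ring

section TuranSupColoring

variable {n r : ℕ} {B₁ : SimpleGraph (Fin n)}

def turanSupColoring (hr : 0 < r) (b : B₁.Coloring (Fin 2))
    (h0 : ∀ x y, B₁.Adj x y → (x : ℕ) % r = 0) : (turanGraph n r ⊔ B₁).Coloring (Fin (r + 1)) :=
  Coloring.mk
    (fun x => ⟨if (x : ℕ) % r = 0 then b x else (x : ℕ) % r + 1, by
      have := Nat.mod_lt x hr; split_ifs <;> omega⟩)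
    fun {x y} hxy => by
      rw [Ne, Fin.ext_iff]
      dsimp only
      rcases hxy with hxy | hxy
      · rw [turanGraph_adj] at hxy
        split_ifs <;> omega
      · rw [if_pos (h0 x y hxy), if_pos (h0 y x hxy.symm)]
        exact fun h => b.valid hxy (Fin.ext h)

theorem turanSupColoring_val (hr : 0 < r) (b : B₁.Coloring (Fin 2))
    (h0 : ∀ x y, B₁.Adj x y → (x : ℕ) % r = 0) (x : Fin n) :
    (turanSupColoring hr b h0 x : ℕ) = if (x : ℕ) % r = 0 then (b x : ℕ) else (x : ℕ) % r + 1 :=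
  rfl

theorem mod_eq_zero_of_turanSupColoring_lt_two (hr : 0 < r) (b : B₁.Coloring (Fin 2))
    (h0 : ∀ x y, B₁.Adj x y → (x : ℕ) % r = 0) {x : Fin n}
    (hx : (turanSupColoring hr b h0 x : ℕ) < 2) : (x : ℕ) % r = 0 := by
  by_contra h
  rw [turanSupColoring_val, if_neg h] at hx
  omega

end TuranSupColoring

theorem exists_isContained_of_isContained_turanGraph_sup {n r : ℕ} (hr : 0 < r)
    {B₁ : SimpleGraph (Fin n)} (hcol : B₁.Colorable 2) (h0 : ∀ x y, B₁.Adj x y → (x : ℕ) % r = 0)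
    {H : SimpleGraph W} (hH : H ⊑ turanGraph n r ⊔ B₁) :
    ∃ (C : H.Coloring (Fin (r + 1))) (c₁ c₂ : Fin (r + 1)), c₁ ≠ c₂ ∧
      SimpleGraph.induce {v | C v = c₁ ∨ C v = c₂} H ⊑ B₁ := by
  obtain ⟨b⟩ := hcol
  obtain ⟨f⟩ := hH
  let κ := turanSupColoring hr b h0
  let c₀ : Fin (r + 1) := ⟨0, by omega⟩
  let c₁ : Fin (r + 1) := ⟨1, by omega⟩
  have mod_eq_zero (w : W) (hw : κ (f w) = c₀ ∨ κ (f w) = c₁) : (f w : ℕ) % r = 0 :=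
    mod_eq_zero_of_turanSupColoring_lt_two hr b h0
      (show (κ (f w) : ℕ) < 2 by rcases hw with h | h <;> simp [h, c₀, c₁])
  refine ⟨κ.comp f.toHom, c₀, c₁, by simp [c₀, c₁, Fin.ext_iff], ?_⟩
  refine ⟨⟨fun v => f v, fun {u v} huv => ?_⟩, fun u v h => Subtype.ext (f.injective h)⟩
  refine (f.toHom.map_adj huv).resolve_left fun h => h ?_
  exact (mod_eq_zero u u.2).trans (mod_eq_zero v v.2).symm

def extendEdge {ι : Type*} [DecidableEq α] [Fintype ι] (e : Sym2 α) (w : ι → α) : Finset α :=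
  e.toFinset ∪ univ.image w

theorem mem_extendEdge {ι : Type*} [DecidableEq α] [Fintype ι] {e : Sym2 α} {w : ι → α}
    {x : α} : x ∈ extendEdge e w ↔ x ∈ e ∨ ∃ i, w i = x := by
  simp [extendEdge]

section ExtendEdge

variable {n r m : ℕ} {e : Sym2 (Fin n)} {w : Fin (m - 2) → Fin n}

theorem mem_sym2_iff_mem_extendEdge (he : ∀ x ∈ e, (x : ℕ) % r = 0)
    (hw : ∀ i, (w i : ℕ) % r = i + 1) {x : Fin n} :
    x ∈ e ↔ x ∈ extendEdge e w ∧ (x : ℕ) % r = 0 := by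
  refine ⟨fun hx => ⟨mem_extendEdge.2 (Or.inl hx), he x hx⟩, fun ⟨hx, h0⟩ => ?_⟩
  obtain hx | ⟨i, rfl⟩ := mem_extendEdge.1 hx
  · exact hx
  · have := hw i; omega

theorem eq_of_mem_extendEdge (he : ∀ x ∈ e, (x : ℕ) % r = 0)
    (hw : ∀ i, (w i : ℕ) % r = i + 1) {x : Fin n} {i : Fin (m - 2)} (hx : x ∈ extendEdge e w)
    (hi : (x : ℕ) % r = i + 1) : x = w i := by
  obtain hx | ⟨j, rfl⟩ := mem_extendEdge.1 hx
  · have := he x hx; omega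
  · rw [hw] at hi
    rw [Fin.ext (by omega : j.val = i.val)]

theorem isNClique_extendEdge (he : ∀ x ∈ e, (x : ℕ) % r = 0)
    (hw : ∀ i, (w i : ℕ) % r = i + 1) (hm : 2 ≤ m) {B₁ : SimpleGraph (Fin n)}
    (hB₁ : e ∈ B₁.edgeSet) : (turanGraph n r ⊔ B₁).IsNClique m (extendEdge e w) := by
  have hw_inj : Function.Injective w := fun i j h =>
    Fin.ext <| Nat.succ_injective <| (hw i).symm.trans (by rw [h]; exact hw j)
  have hdisj : Disjoint e.toFinset (univ.image w) := by
    simp only [Finset.disjoint_left, Sym2.mem_toFinset, mem_image, mem_univ, true_and, not_exists]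
    rintro x hx i rfl
    have := he _ hx; have := hw i; omega
  refine ⟨fun x hx y hy hxy => ?_, ?_⟩
  · by_cases hmod : (x : ℕ) % r = (y : ℕ) % r
    · right
      rw [mem_coe] at hx hy
      by_cases h0 : (x : ℕ) % r = 0
      · have hxe := (mem_sym2_iff_mem_extendEdge he hw).2 ⟨hx, h0⟩
        have hye := (mem_sym2_iff_mem_extendEdge he hw).2 ⟨hy, hmod ▸ h0⟩
        rwa [(Sym2.mem_and_mem_iff hxy).1 ⟨hxe, hye⟩] at hB₁
      · obtain hx' | ⟨i, rfl⟩ := mem_extendEdge.1 hx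
        · exact (h0 (he _ hx')).elim
        · exact (hxy (eq_of_mem_extendEdge he hw hy (hmod ▸ hw i)).symm).elim
    · exact Or.inl hmod
  · rw [extendEdge, card_union_of_disjoint hdisj,
      Sym2.card_toFinset_of_not_isDiag _ (B₁.not_isDiag_of_mem_edgeSet hB₁),
      card_image_of_injective _ hw_inj, card_univ, Fintype.card_fin]
    omega

end ExtendEdge

theorem card_cliqueFinset_turanGraph_add_le {n r m : ℕ} (hm : 2 ≤ m) {B₁ : SimpleGraph (Fin n)}
    [DecidableRel B₁.Adj] (h0 : ∀ x y, B₁.Adj x y → (x : ℕ) % r = 0) :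
    #((turanGraph n r).cliqueFinset m) +
        #B₁.edgeFinset * ∏ i : Fin (m - 2), #{v : Fin n | (v : ℕ) % r = i + 1} ≤
      #((turanGraph n r ⊔ B₁).cliqueFinset m) := by
  let D := B₁.edgeFinset ×ˢ
    Fintype.piFinset fun i : Fin (m - 2) => {v : Fin n | (v : ℕ) % r = i + 1}
  let Φ (d : Sym2 (Fin n) × (Fin (m - 2) → Fin n)) := extendEdge d.1 d.2
  have hD {d} (hd : d ∈ D) :
      d.1 ∈ B₁.edgeSet ∧ (∀ x ∈ d.1, (x : ℕ) % r = 0) ∧ ∀ i, (d.2 i : ℕ) % r = i + 1 := by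
    obtain ⟨he, hw⟩ := mem_product.1 hd
    rw [mem_edgeFinset] at he
    refine ⟨he, fun x hx => ?_, fun i => by simpa using Fintype.mem_piFinset.1 hw i⟩
    obtain ⟨y, hy⟩ := Sym2.mem_iff_exists.1 hx
    rw [hy, mem_edgeSet] at he
    exact h0 x y he
  have hinj : Set.InjOn Φ D := by
    intro d hd d' hd' h
    replace h : extendEdge d.1 d.2 = extendEdge d'.1 d'.2 := h
    obtain ⟨-, he, hw⟩ := hD hd
    obtain ⟨-, he', hw'⟩ := hD hd'
    refine Prod.ext (Sym2.ext fun x => ?_) (funext fun i => ?_)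
    · rw [mem_sym2_iff_mem_extendEdge he hw, mem_sym2_iff_mem_extendEdge he' hw', h]
    · exact eq_of_mem_extendEdge he' hw' (h ▸ mem_extendEdge.2 (Or.inr ⟨i, rfl⟩)) (hw i)
  have hdisj : Disjoint ((turanGraph n r).cliqueFinset m) (D.image Φ) := by
    refine disjoint_right.2 fun s hs hT => ?_
    obtain ⟨⟨e, w⟩, hd, rfl⟩ := mem_image.1 hs
    obtain ⟨he, he0, -⟩ := hD hd
    induction e using Sym2.ind with | _ x y => ?_
    have hx := Sym2.mem_mk_left x y
    have hy := Sym2.mem_mk_right x y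
    refine (mem_cliqueFinset_iff.1 hT).isClique (mem_extendEdge.2 (Or.inl hx))
      (mem_extendEdge.2 (Or.inl hy)) (B₁.ne_of_adj he) ?_
    exact (he0 x hx).trans (he0 y hy).symm
  calc #((turanGraph n r).cliqueFinset m) +
        #B₁.edgeFinset * ∏ i : Fin (m - 2), #{v : Fin n | (v : ℕ) % r = i + 1}
      = #((turanGraph n r).cliqueFinset m ∪ D.image Φ) := by
        rw [card_union_of_disjoint hdisj, card_image_of_injOn hinj, card_product,
          Fintype.card_piFinset]
    _ ≤ #((turanGraph n r ⊔ B₁).cliqueFinset m) := by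
        refine card_le_card (union_subset (cliqueFinset_mono _ le_sup_left) fun s hs => ?_)
        obtain ⟨d, hd, rfl⟩ := mem_image.1 hs
        obtain ⟨he, he0, hw⟩ := hD hd
        exact mem_cliqueFinset_iff.2 (isNClique_extendEdge he0 hw hm he)

theorem free_turanGraph_sup {n r : ℕ} (hr : 0 < r) {H : SimpleGraph W}
    {B B₁ : SimpleGraph (Fin n)} (hB : DecompositionFree H r B) (hB₁B : B₁ ⊑ B)
    (hcol : B₁.Colorable 2) (h0 : ∀ x y, B₁.Adj x y → (x : ℕ) % r = 0) :
    _root_.Free H (turanGraph n r ⊔ B₁) := by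
  rw [free_iff_not_isContained]
  intro hH
  obtain ⟨C, c₁, c₂, hc, hC⟩ := exists_isContained_of_isContained_turanGraph_sup hr hcol h0 hH
  exact free_iff_not_isContained.1 (hB C c₁ c₂ hc) (hC.trans hB₁B)

theorem exists_copies_turanGraph_add_le_genEx {m r n : ℕ} (hm : 2 ≤ m) (hmr : m ≤ r)
    {H : SimpleGraph W} (hH : ¬ H.Colorable r) (hn : 6 * r ≤ n) :
    ∃ e : ℕ, biex n H r ≤ 2 * Fintype.card (Sym2 (Fin (3 * r))) * e ∧
      copies (⊤ : SimpleGraph (Fin m)) (turanGraph n r) + e * (n / r) ^ (m - 2) ≤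
        genEx n (⊤ : SimpleGraph (Fin m)) H := by
  classical
  have hr : 0 < r := by omega
  obtain ⟨B, hB, hBcard⟩ := exists_decompositionFree_card_edgeSet_eq_biex hH n
  obtain ⟨B₁, hB₁B, hcol, h0, hB₁⟩ := exists_isContained_colorable_two_adj_mod_eq_zero hr hn B
  refine ⟨Nat.card B₁.edgeSet, hBcard ▸ hB₁, ?_⟩
  refine le_trans ?_ (copies_le_genEx (free_turanGraph_sup hr hB hB₁B hcol h0))
  rw [copies_top_eq_card_cliqueFinset, copies_top_eq_card_cliqueFinset, Nat.card_eq_fintype_card,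
    ← edgeFinset_card]
  refine le_trans ?_ (card_cliqueFinset_turanGraph_add_le hm h0)
  gcongr
  simpa using pow_card_le_prod univ (fun i : Fin (m - 2) => #{v : Fin n | (v : ℕ) % r = i + 1})
    (n / r) fun i _ => Fin.div_le_card_filter_mod_eq n (by omega)

end SimpleGraph

theorem statement1_general {W : Type*} (m r : ℕ) (H : SimpleGraph W)
    (hm : 2 ≤ m) (hmr : m < r + 1) (hχ : H.chromaticNumber = (r + 1 : ℕ)) :
    ∃ (c : ℝ) (n₀ : ℕ), 0 < c ∧ ∀ n ≥ n₀,
      (copies (⊤ : SimpleGraph (Fin m)) (turanGraph n r) : ℝ)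
          + c * (biex n H r) * (n : ℝ) ^ (m - 2)
        ≤ (genEx n (⊤ : SimpleGraph (Fin m)) H : ℝ) := by
  have hr : 0 < r := by omega
  set S := Fintype.card (Sym2 (Fin (3 * r)))
  have hS : 0 < S := Fintype.card_pos_iff.2 ⟨s(⟨0, by omega⟩, ⟨0, by omega⟩)⟩
  refine ⟨1 / (2 * S * (2 * r) ^ (m - 2)), 6 * r, by positivity, fun n hn => ?_⟩
  obtain ⟨e, hbiex, hcount⟩ := exists_copies_turanGraph_add_le_genEx hm (by omega)
    (not_colorable_of_chromaticNumber_eq hχ) hn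
  have hn_le : (n : ℝ) ≤ 2 * r * (n / r : ℕ) := by
    exact_mod_cast Nat.le_two_mul_mul_div hr (by omega)
  calc (copies (⊤ : SimpleGraph (Fin m)) (turanGraph n r) : ℝ)
        + 1 / (2 * S * (2 * r) ^ (m - 2)) * (biex n H r) * (n : ℝ) ^ (m - 2)
      ≤ copies (⊤ : SimpleGraph (Fin m)) (turanGraph n r)
        + 1 / (2 * S * (2 * r) ^ (m - 2)) * (2 * S * e) * (2 * r * (n / r : ℕ)) ^ (m - 2) := by
        gcongr
        exact_mod_cast hbiex
    _ = copies (⊤ : SimpleGraph (Fin m)) (turanGraph n r) + e * (n / r : ℕ) ^ (m - 2) := by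
        field_simp
        ring
    _ ≤ genEx n (⊤ : SimpleGraph (Fin m)) H := by exact_mod_cast hcount

theorem statement1 {W : Type*} [Fintype W] (m r : ℕ) (H : SimpleGraph W)
    (hm : 2 ≤ m) (hmr : m < r + 1) (hχ : H.chromaticNumber = (r + 1 : ℕ)) :
    ∃ (c : ℝ) (n₀ : ℕ), 0 < c ∧ ∀ n ≥ n₀,
      (copies (⊤ : SimpleGraph (Fin m)) (turanGraph n r) : ℝ)
          + c * (biex n H r) * (n : ℝ) ^ (m - 2)
        ≤ (genEx n (⊤ : SimpleGraph (Fin m)) H : ℝ) :=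
  statement1_general m r H hm hmr hχ
end

section
/- Let r ≥ 2 and t ≥ s ≥ 1 be integers with t ≤ s + 1/2 + √(2s + 1/4), set q = t − s, and define the real function H(z) = s·λ_{s,t}·(s·λ̃_{s,t,r−1} + t)·z − (s² − s)·λ̃_{s,t,r}/(r−1) + s·t·(r−1)^q·z^{q+1} − (t² − t)·(r−1)^{q−1}·z^q. Then H is strictly increasing on the interval [1/(r−1), +∞) and H(1/(r−1)) ≥ 0; moreover H(1/(r−1)) = 0 if and only if r = 2 and t = s + 1/2 + √(2s + 1/4). -/
/-!
Write `q = t - s`; the hypothesis on `t` says exactly `q ^ 2 - q ≤ 2 * s`, and equality in it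
means that `q` is the positive root `1/2 + √(2s + 1/4)` of `q ^ 2 - q = 2 * s`.

If `s = t` then `q = 0` and `H z = 2 s² z - 2 (s² - s)/(r - 1)` is affine with value `2s/(r - 1) > 0`
at `1/(r - 1)`. If `q = m + 1 ≥ 1`, then `H` is a trinomial `a z + b z^(m+2) - c z^(m+1) + d` with
`b > 0`. Its second derivative is positive beyond `1/(r - 1)` because `m c ≤ (m + 2) b/(r - 1)`
(which reduces to `m² ≤ 2s`), and its derivative at `1/(r - 1)` is `s² (r - 2) + t (2s - m² - m) ≥ 0`,
so `H` is strictly increasing on `[1/(r - 1), ∞)`. Finally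
`(r - 1) H(1/(r - 1)) = s (r - 2) + (2s - m² - m)`, a sum of two nonnegative terms, which vanishes
exactly when `r = 2` and `m² + m = 2s`, i.e. `q = 1/2 + √(2s + 1/4)`.
-/

open Set

theorem strictMonoOn_Ici_of_deriv_nonneg_of_deriv2_pos {f f' f'' : ℝ → ℝ} {x : ℝ}
    (hf : ∀ z, HasDerivAt f (f' z) z) (hf' : ∀ z, HasDerivAt f' (f'' z) z)
    (hx : 0 ≤ f' x) (hf'' : ∀ z, x < z → 0 < f'' z) : StrictMonoOn f (Ici x) := by
  have hmono : StrictMonoOn f' (Ici x) :=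
    strictMonoOn_of_deriv_pos (convex_Ici x)
      (continuous_iff_continuousAt.2 fun z => (hf' z).continuousAt).continuousOn
      fun z hz => by
        rw [interior_Ici] at hz
        rw [(hf' z).deriv]
        exact hf'' z hz
  refine strictMonoOn_of_deriv_pos (convex_Ici x)
    (continuous_iff_continuousAt.2 fun z => (hf z).continuousAt).continuousOn fun z hz => ?_
  rw [interior_Ici] at hz
  rw [(hf z).deriv]
  exact hx.trans_lt (hmono self_mem_Ici (mem_Ici.2 hz.le) hz)

theorem strictMonoOn_Ici_trinomial {a b c d x : ℝ} (m : ℕ) (hx : 0 < x) (hb : 0 < b)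
    (hc : m * c ≤ (m + 2) * b * x)
    (h0 : 0 ≤ a + (m + 2) * b * x ^ (m + 1) - (m + 1) * c * x ^ m) :
    StrictMonoOn (fun z => a * z + b * z ^ (m + 2) - c * z ^ (m + 1) + d) (Ici x) := by
  refine strictMonoOn_Ici_of_deriv_nonneg_of_deriv2_pos
    (f' := fun z => a + (m + 2) * b * z ^ (m + 1) - (m + 1) * c * z ^ m)
    (f'' := fun z => (m + 1) * ((m + 2) * b * z ^ m - c * (m * z ^ (m - 1))))
    (fun z => ?_) (fun z => ?_) h0 fun z hz => ?_
  · refine ((((hasDerivAt_id z).const_mul a).add ((hasDerivAt_pow (m + 2) z).const_mul b)).sub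
      ((hasDerivAt_pow (m + 1) z).const_mul c)).add_const d |>.congr_deriv ?_
    simp only [Nat.add_sub_cancel, show m + 2 - 1 = m + 1 from rfl]
    push_cast
    ring
  · refine (((hasDerivAt_pow (m + 1) z).const_mul ((m + 2) * b)).const_add a).sub
      ((hasDerivAt_pow m z).const_mul ((m + 1) * c)) |>.congr_deriv ?_
    simp only [Nat.add_sub_cancel]
    push_cast
    ring
  have hz0 : 0 < z := hx.trans hz
  -- multiplying by `z` gets rid of the exponent `m - 1`, truncated at `m = 0`
  have hzpow : z * (m * z ^ (m - 1)) = m * z ^ m := by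
    cases m <;> simp [pow_succ]; ring
  have hgap : 0 < (m + 2) * b * z - m * c := by
    nlinarith [mul_lt_mul_of_pos_left hz (show 0 < (m + 2) * b by positivity)]
  have hzf : 0 < z * ((m + 2) * b * z ^ m - c * (m * z ^ (m - 1))) := by
    rw [mul_sub, mul_left_comm z c, hzpow]
    nlinarith [mul_pos (pow_pos hz0 m) hgap]
  exact mul_pos (by positivity) (pos_of_mul_pos_right hzf hz0.le)

theorem sq_sub_le_of_le_half_add_sqrt {q s : ℝ} (hq : 0 ≤ q) (hs : 0 ≤ s)
    (h : q ≤ 1 / 2 + √(2 * s + 1 / 4)) : q ^ 2 - q ≤ 2 * s := by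
  rcases le_or_gt q (1 / 2) with hq' | hq'
  · nlinarith
  · have := (Real.le_sqrt' (by linarith)).1 (show q - 1 / 2 ≤ √(2 * s + 1 / 4) by linarith)
    nlinarith

theorem eq_half_add_sqrt_iff {q s : ℝ} (hq : 1 / 2 < q) :
    q = 1 / 2 + √(2 * s + 1 / 4) ↔ q ^ 2 - q = 2 * s := by
  rw [← sub_eq_iff_eq_add', eq_comm, Real.sqrt_eq_iff_mul_self_eq_of_pos (by linarith)]
  constructor <;> intro h <;> linarith

noncomputable def H (r s t q : ℕ) (z : ℝ) : ℝ :=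
  (s : ℝ) * (if s = t then (1 / 2 : ℝ) else 1)
      * ((s : ℝ) * (if s = t then (1 : ℝ) else (r : ℝ) - 2) + t) * z
    - ((s : ℝ) ^ 2 - s) * (if s = t then (1 : ℝ) else (r : ℝ) - 1) / ((r : ℝ) - 1)
    + (s : ℝ) * t * ((r : ℝ) - 1) ^ q * z ^ (q + 1)
    - ((t : ℝ) ^ 2 - t) * ((r : ℝ) - 1) ^ ((q : ℤ) - 1) * z ^ q

theorem H_self (r s : ℕ) (z : ℝ) :
    H r s s 0 z = 2 * s ^ 2 * z - 2 * ((s : ℝ) ^ 2 - s) / (r - 1) := by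
  simp only [H, if_true]
  push_cast
  simp only [zpow_neg_one, pow_zero, pow_one]
  ring

theorem H_of_ne {r s t : ℕ} (m : ℕ) (hr : (r : ℝ) ≠ 1) (hst : s ≠ t) (z : ℝ) :
    H r s t (m + 1) z = s * (s * (r - 2) + t) * z + s * t * (r - 1) ^ (m + 1) * z ^ (m + 2)
      - (t ^ 2 - t) * (r - 1) ^ m * z ^ (m + 1) - ((s : ℝ) ^ 2 - s) := by
  have hr' : (r : ℝ) - 1 ≠ 0 := sub_ne_zero.2 hr
  simp only [H, if_neg hst]
  push_cast
  simp only [add_sub_cancel_right, zpow_natCast, mul_div_assoc, div_self hr']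
  ring

theorem strictMonoOn_H {r s t m : ℕ} (hr : 2 ≤ r) (hs : 0 < s) (ht : t = s + m + 1)
    (hm : (m : ℝ) ^ 2 + m ≤ 2 * s) : StrictMonoOn (H r s t (m + 1)) (Ici (1 / (r - 1))) := by
  have hr' : (2 : ℝ) ≤ r := by exact_mod_cast hr
  have hs' : (0 : ℝ) < s := by exact_mod_cast hs
  have ht' : (t : ℝ) = s + m + 1 := by rw [ht]; push_cast; ring
  have hR : (0 : ℝ) < r - 1 := by linarith
  have hRpow (n : ℕ) : ((r : ℝ) - 1) ^ n * (1 / (r - 1)) ^ n = 1 := by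
    rw [← mul_pow, mul_one_div_cancel hR.ne', one_pow]
  rw [funext (H_of_ne m (by linarith) (by omega))]
  refine strictMonoOn_Ici_trinomial m (one_div_pos.2 hR) (by subst ht; positivity) ?_ ?_
  · have hsplit : (m + 2) * (s * t * ((r : ℝ) - 1) ^ (m + 1)) * (1 / (r - 1))
        = (m + 2) * (s * t) * (r - 1) ^ m := by
      field_simp
      ring
    have key : m * ((t : ℝ) ^ 2 - t) ≤ (m + 2) * (s * t) := by rw [ht']; nlinarith
    rw [hsplit]
    nlinarith [mul_le_mul_of_nonneg_right key (pow_nonneg hR.le m)]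
  · calc (0 : ℝ) ≤ s ^ 2 * (r - 2) + t * (2 * s - m ^ 2 - m) := by
          have : (0 : ℝ) ≤ t := by rw [ht']; positivity
          exact add_nonneg (by nlinarith) (mul_nonneg this (by linarith))
      _ = s * (s * (r - 2) + t) + (m + 2) * (s * t * ((r - 1) ^ (m + 1) * (1 / (r - 1)) ^ (m + 1)))
            - (m + 1) * ((t ^ 2 - t) * ((r - 1) ^ m * (1 / (r - 1)) ^ m)) := by
        rw [hRpow, hRpow, ht']
        ring
      _ = _ := by ring

theorem H_eval_inv_sub_one {r s t m : ℕ} (hr : 2 ≤ r) (ht : t = s + m + 1) :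
    H r s t (m + 1) (1 / (r - 1)) = (s * (r - 2) + (2 * s - m ^ 2 - m)) / (r - 1) := by
  have hr' : (2 : ℝ) ≤ r := by exact_mod_cast hr
  have hR : (r : ℝ) - 1 ≠ 0 := by linarith
  rw [H_of_ne m (by linarith) (by omega), ht]
  simp only [one_div, inv_pow]
  field_simp
  push_cast
  ring

theorem H_eval_inv_sub_one_nonneg {r s t m : ℕ} (hr : 2 ≤ r) (ht : t = s + m + 1)
    (hm : (m : ℝ) ^ 2 + m ≤ 2 * s) : 0 ≤ H r s t (m + 1) (1 / (r - 1)) := by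
  have hr' : (2 : ℝ) ≤ r := by exact_mod_cast hr
  rw [H_eval_inv_sub_one hr ht]
  exact div_nonneg (add_nonneg (mul_nonneg s.cast_nonneg (by linarith)) (by linarith))
    (by linarith)

theorem H_eval_inv_sub_one_eq_zero_iff {r s t m : ℕ} (hr : 2 ≤ r) (hs : 0 < s)
    (ht : t = s + m + 1) (hm : (m : ℝ) ^ 2 + m ≤ 2 * s) :
    H r s t (m + 1) (1 / (r - 1)) = 0 ↔ r = 2 ∧ (m : ℝ) ^ 2 + m = 2 * s := by
  have hr' : (2 : ℝ) ≤ r := by exact_mod_cast hr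
  have hs' : (0 : ℝ) < s := by exact_mod_cast hs
  rw [H_eval_inv_sub_one hr ht, div_eq_zero_iff, or_iff_left (by linarith),
    add_eq_zero_iff_of_nonneg (by nlinarith) (by linarith), mul_eq_zero, or_iff_right hs'.ne',
    sub_eq_zero]
  exact and_congr (by norm_cast) (by constructor <;> intro h <;> linarith)

theorem H_self_eval_inv_sub_one (r s : ℕ) (hr : 2 ≤ r) :
    H r s s 0 (1 / (r - 1)) = 2 * s / (r - 1) := by
  have hr' : (2 : ℝ) ≤ r := by exact_mod_cast hr
  have hR : (r : ℝ) - 1 ≠ 0 := by linarith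
  rw [H_self]
  field_simp
  ring

theorem strictMono_H_self (r : ℕ) {s : ℕ} (hs : 0 < s) : StrictMono (H r s s 0) := by
  intro z w hzw
  simp only [H_self]
  have : (0 : ℝ) < s := by exact_mod_cast hs
  nlinarith [mul_pos (pow_pos this 2) (sub_pos.2 hzw)]

theorem statement18 (r s t : ℕ) (hr : 2 ≤ r) (hs : 1 ≤ s) (hst : s ≤ t)
    (ht : (t : ℝ) ≤ s + 1 / 2 + Real.sqrt (2 * s + 1 / 4))
    (q : ℕ) (hq : q = t - s) (Hf : ℝ → ℝ)
    (hHf : ∀ z : ℝ, Hf z =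
      (s : ℝ) * (if s = t then (1 / 2 : ℝ) else 1)
          * ((s : ℝ) * (if s = t then (1 : ℝ) else (r : ℝ) - 2) + t) * z
        - ((s : ℝ) ^ 2 - s) * (if s = t then (1 : ℝ) else (r : ℝ) - 1) / ((r : ℝ) - 1)
        + (s : ℝ) * t * ((r : ℝ) - 1) ^ q * z ^ (q + 1)
        - ((t : ℝ) ^ 2 - t) * ((r : ℝ) - 1) ^ ((q : ℤ) - 1) * z ^ q) :
    StrictMonoOn Hf (Set.Ici (1 / ((r : ℝ) - 1))) ∧
    0 ≤ Hf (1 / ((r : ℝ) - 1)) ∧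
    (Hf (1 / ((r : ℝ) - 1)) = 0 ↔
      r = 2 ∧ (t : ℝ) = s + 1 / 2 + Real.sqrt (2 * s + 1 / 4)) := by
  have hr' : (2 : ℝ) ≤ r := by exact_mod_cast hr
  have hs' : (0 : ℝ) < s := by exact_mod_cast hs
  obtain rfl : Hf = H r s t q := funext hHf
  obtain rfl | hlt := hst.eq_or_lt
  · obtain rfl : q = 0 := by omega
    have hpos : 0 < H r s s 0 (1 / (r - 1)) := by
      rw [H_self_eval_inv_sub_one r s hr]
      exact div_pos (by positivity) (by linarith)
    refine ⟨(strictMono_H_self r hs).strictMonoOn _, hpos.le, iff_of_false hpos.ne' ?_⟩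
    rintro ⟨-, h⟩
    linarith [Real.sqrt_nonneg (2 * s + 1 / 4)]
  · obtain ⟨m, rfl⟩ := Nat.exists_eq_add_of_lt hlt
    obtain rfl : q = m + 1 := by omega
    push_cast at ht ⊢
    have hm : (m : ℝ) ^ 2 + m ≤ 2 * s := by
      have := sq_sub_le_of_le_half_add_sqrt (q := m + 1) (by positivity) hs'.le (by linarith)
      linarith
    refine ⟨strictMonoOn_H hr hs rfl hm, H_eval_inv_sub_one_nonneg hr rfl hm, ?_⟩
    rw [H_eval_inv_sub_one_eq_zero_iff hr hs rfl hm, add_assoc (s : ℝ), add_assoc (s : ℝ),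
      add_right_inj, eq_half_add_sqrt_iff (by linarith [(m.cast_nonneg : (0 : ℝ) ≤ m)])]
    exact and_congr_right fun _ => by constructor <;> intro h <;> linear_combination h
end

section
/- Let r ≥ 2 and t ≥ s ≥ 1 be integers with t ≤ s + 1/2 + √(2s + 1/4), set q = t − s, and define the real function f(z) = (s·z − q)·(1+z)^q + (t + (r−2)·s)·z + q. Then f is strictly increasing on [0, +∞), f(0) = 0, and f′(0) = s·r + q − q². -/
/-!
Write `q = n + 1`, `a = s - q²`, `b = (q + 1) s` and `C = t + (r - 2) s`. Then
`f'(z) = (1 + z)ⁿ (a + b z) + C`. By induction on `n`, `(1 + z)ⁿ (a + b z)` lies above its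
tangent line `a + (b + n a) z` at `0` as long as `b ≥ 0` and `b + n a ≥ 0`, and
`b + n a = q (2 s + q - q²)` is nonnegative precisely by the hypothesis on `t` (after squaring).
So `f'(z) > a + C = f'(0) = r s + q - q² ≥ 0` for `z > 0`.
-/

open Set

theorem add_mul_le_one_add_pow_mul {a b z : ℝ} {m : ℕ} (hz : 0 ≤ z) (hb : 0 ≤ b)
    (hbm : 0 ≤ b + m * a) : a + (b + m * a) * z ≤ (1 + z) ^ m * (a + b * z) := by
  induction m with
  | zero => simp
  | succ n ih =>
    push_cast at hbm
    -- `b + n a` is a convex combination of `b` and `b + (n + 1) a`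
    have hbn : 0 ≤ b + n * a := by
      have : (n + 1 : ℝ) * (b + n * a) = b + n * (b + (n + 1) * a) := by ring
      nlinarith [mul_nonneg (Nat.cast_nonneg (α := ℝ) n) hbm]
    calc a + (b + ↑(n + 1) * a) * z ≤ (1 + z) * (a + (b + n * a) * z) := by
          push_cast; nlinarith [mul_nonneg hbn (mul_nonneg hz hz)]
      _ ≤ (1 + z) * ((1 + z) ^ n * (a + b * z)) :=
          mul_le_mul_of_nonneg_left (ih hbn) (by linarith)
      _ = (1 + z) ^ (n + 1) * (a + b * z) := by ring

theorem lt_one_add_pow_mul {a b z : ℝ} {m : ℕ} (hz : 0 < z) (hb : 0 < b)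
    (hbm : 0 ≤ b + m * a) : a < (1 + z) ^ m * (a + b * z) := by
  cases m with
  | zero => simpa using mul_pos hb hz
  | succ n =>
    push_cast at hbm
    have hbn : 0 < b + n * a := by
      have : (n + 1 : ℝ) * (b + n * a) = b + n * (b + (n + 1) * a) := by ring
      nlinarith [mul_nonneg (Nat.cast_nonneg (α := ℝ) n) hbm]
    calc a < a + (b + (n + 1) * a) * z + (b + n * a) * z ^ 2 := by
          have := mul_pos hbn (pow_pos hz 2); nlinarith [mul_nonneg hbm hz.le]
      _ = (1 + z) * (a + (b + n * a) * z) := by ring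
      _ ≤ (1 + z) * ((1 + z) ^ n * (a + b * z)) :=
          mul_le_mul_of_nonneg_left (add_mul_le_one_add_pow_mul hz.le hb.le hbn.le) (by linarith)
      _ = (1 + z) ^ (n + 1) * (a + b * z) := by ring

theorem sq_le_two_mul_add_of_le_half_add_sqrt {x s : ℝ} (hx : 0 ≤ x) (hs : 0 ≤ s)
    (h : x ≤ 1 / 2 + √(2 * s + 1 / 4)) : x ^ 2 ≤ 2 * s + x := by
  have hsq := Real.sq_sqrt (by positivity : (0:ℝ) ≤ 2 * s + 1 / 4)
  have hhalf : 1 / 2 ≤ √(2 * s + 1 / 4) := by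
    rw [Real.le_sqrt (by norm_num) (by positivity)]; linarith
  have : |x - 1 / 2| ≤ √(2 * s + 1 / 4) := abs_le.2 ⟨by linarith, by linarith⟩
  nlinarith [sq_le_sq' (abs_le.1 this).1 (abs_le.1 this).2]

/-- The function `f` of the statement, with `C = t + (r - 2) s`. -/
def profile (s C : ℝ) (q : ℕ) (z : ℝ) : ℝ := (s * z - q) * (1 + z) ^ q + C * z + q

theorem hasDerivAt_profile (s C : ℝ) (q : ℕ) (z : ℝ) :
    HasDerivAt (profile s C q) (s * (1 + z) ^ q + (s * z - q) * (q * (1 + z) ^ (q - 1)) + C) z := by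
  have hlin : HasDerivAt (fun z : ℝ => s * z - q) s z := by
    simpa using ((hasDerivAt_id z).const_mul s).sub_const (q : ℝ)
  have hpow : HasDerivAt (fun z : ℝ => (1 + z) ^ q) (q * (1 + z) ^ (q - 1)) z := by
    simpa using ((hasDerivAt_id z).const_add 1).fun_pow q
  have hC : HasDerivAt (fun z : ℝ => C * z) C z := by simpa using (hasDerivAt_id z).const_mul C
  exact ((hlin.mul hpow).add hC).add_const (q : ℝ)

theorem profile_zero (s C : ℝ) (q : ℕ) : profile s C q 0 = 0 := by simp [profile]

theorem deriv_profile_zero (s C : ℝ) (q : ℕ) : deriv (profile s C q) 0 = s - q ^ 2 + C := by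
  rw [(hasDerivAt_profile s C q 0).deriv]
  simp only [add_zero, one_pow, mul_one, mul_zero, zero_sub, neg_mul, add_left_inj]
  ring

theorem profile_deriv_pos {s C z : ℝ} {q : ℕ} (hs : 0 < s) (hC : 0 ≤ C)
    (hq : (q : ℝ) ^ 2 ≤ 2 * s + q) (h0 : 0 ≤ s - q ^ 2 + C) (hz : 0 < z) :
    0 < s * (1 + z) ^ q + (s * z - q) * (q * (1 + z) ^ (q - 1)) + C := by
  cases q with
  | zero =>
    simp only [pow_zero, mul_one, CharP.cast_eq_zero, sub_zero, zero_tsub, mul_zero, add_zero]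
    linarith
  | succ n =>
    push_cast at hq h0 ⊢
    have key : s * (1 + z) ^ (n + 1) + (s * z - (n + 1)) * ((n + 1) * (1 + z) ^ n)
        = (1 + z) ^ n * ((s - (n + 1) ^ 2) + (n + 2) * s * z) := by ring
    have hb : 0 ≤ (n + 2) * s + n * (s - (n + 1) ^ 2) := by
      have hgap : 0 ≤ 2 * s + (n + 1) - (n + 1) ^ 2 := by linarith
      nlinarith [mul_nonneg (by positivity : (0 : ℝ) ≤ n + 1) hgap]
    have := lt_one_add_pow_mul hz (by positivity) hb
    rw [key]; linarith [mul_assoc ((n:ℝ) + 2) s z]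

theorem strictMonoOn_profile {s C : ℝ} {q : ℕ} (hs : 0 < s) (hC : 0 ≤ C)
    (hq : (q : ℝ) ^ 2 ≤ 2 * s + q) (h0 : 0 ≤ s - q ^ 2 + C) :
    StrictMonoOn (profile s C q) (Ici 0) := by
  refine strictMonoOn_of_deriv_pos (convex_Ici 0)
    (HasDerivAt.continuousOn fun z _ => hasDerivAt_profile s C q z) fun z hz => ?_
  rw [interior_Ici] at hz
  rw [(hasDerivAt_profile s C q z).deriv]
  exact profile_deriv_pos hs hC hq h0 hz

theorem statement19 (r s t : ℕ) (hr : 2 ≤ r) (hs : 1 ≤ s) (hst : s ≤ t)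
    (ht : (t : ℝ) ≤ s + 1 / 2 + Real.sqrt (2 * s + 1 / 4))
    (q : ℕ) (hq : q = t - s) (f : ℝ → ℝ)
    (hf : ∀ z : ℝ, f z =
      ((s : ℝ) * z - q) * (1 + z) ^ q + ((t : ℝ) + ((r : ℝ) - 2) * s) * z + q) :
    StrictMonoOn f (Set.Ici (0 : ℝ)) ∧ f 0 = 0 ∧
    deriv f 0 = (s : ℝ) * r + q - (q : ℝ) ^ 2 := by
  obtain rfl : f = profile s (t + (r - 2) * s) q := funext hf
  have hqts : (q : ℝ) = t - s := by rw [hq, Nat.cast_sub hst]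
  have hs' : (1 : ℝ) ≤ s := by exact_mod_cast hs
  have hr' : (2 : ℝ) ≤ r := by exact_mod_cast hr
  have hC : (0 : ℝ) ≤ t + (r - 2) * s :=
    add_nonneg (Nat.cast_nonneg t) (mul_nonneg (by linarith) (Nat.cast_nonneg s))
  have hq2 : (q : ℝ) ^ 2 ≤ 2 * s + q :=
    sq_le_two_mul_add_of_le_half_add_sqrt (Nat.cast_nonneg q) (Nat.cast_nonneg s) (by linarith)
  refine ⟨strictMonoOn_profile (by positivity) hC hq2 (by nlinarith), profile_zero .., ?_⟩
  rw [deriv_profile_zero, hqts]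
  ring
end
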